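/- Let A be an n-by-n Hermitian matrix, x a unit eigenvector with Ax = λx, A nonsingular, and y a unit vector with 0 < φ = ∠(x, y) ≤ π/2. Write φ_A = ∠(x, Ay). Then a_0² cos²φ + sin²φ ≤ sin²φ / sin²φ_A ≤ a_1² cos²φ + sin²φ, where a_0² = λ² / (max over eigenvalues λ_j of A other than λ of λ_j²) and a_1² = λ² / (min over eigenvalues λ_j of A other than λ of λ_j²), the maxima and minima taken over the eigenvalues of A restricted to the orthogonal complement of x (i.e., the multiset Λ(A) with one copy of λ removed). -/

import Mathlib

open Matrix
open scoped ComplexOrder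

noncomputable def hnorm {n : ℕ} (x : Fin n → ℂ) : ℝ :=
  Real.sqrt ((star x ⬝ᵥ x).re)

noncomputable def cosAngle {n : ℕ} (x y : Fin n → ℂ) : ℝ :=
  ‖star x ⬝ᵥ y‖ / (hnorm x * hnorm y)

noncomputable def sinAngle {n : ℕ} (x y : Fin n → ℂ) : ℝ :=
  Real.sqrt (1 - cosAngle x y ^ 2)

noncomputable def sinAngleSub {n : ℕ} (x : Fin n → ℂ) (K : Submodule ℂ (Fin n → ℂ)) : ℝ :=
  sInf {s : ℝ | ∃ y ∈ K, y ≠ 0 ∧ s = sinAngle x y}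

noncomputable def sinAngleSubSub {n : ℕ} (X K : Submodule ℂ (Fin n → ℂ)) : ℝ :=
  sInf {s : ℝ | ∃ x ∈ X, x ≠ 0 ∧ ∃ y ∈ K, y ≠ 0 ∧ s = sinAngle x y}

def Eigenpair {n : ℕ} (A : Matrix (Fin n) (Fin n) ℂ) (μ : ℂ) (v : Fin n → ℂ) : Prop :=
  v ≠ 0 ∧ A *ᵥ v = μ • v

noncomputable def specNorm {n : ℕ} (M : Matrix (Fin n) (Fin n) ℂ) : ℝ :=
  sSup {r : ℝ | ∃ v : Fin n → ℂ, hnorm v = 1 ∧ r = hnorm (M *ᵥ v)}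

noncomputable def frobNorm {m p : ℕ} (M : Matrix (Fin m) (Fin p) ℂ) : ℝ :=
  Real.sqrt (∑ i, ∑ j, ‖M i j‖ ^ 2)

noncomputable def specCond {n : ℕ} (M : Matrix (Fin n) (Fin n) ℂ) : ℝ :=
  sSup {r : ℝ | ∃ μ ∈ spectrum ℂ M, r = ‖μ‖} /
    sInf {r : ℝ | ∃ μ ∈ spectrum ℂ M, r = ‖μ‖}

def RitzPair {n : ℕ} (A : Matrix (Fin n) (Fin n) ℂ) (K : Submodule ℂ (Fin n → ℂ))
    (μ : ℂ) (u : Fin n → ℂ) : Prop :=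
  u ∈ K ∧ u ≠ 0 ∧ ∀ y ∈ K, star y ⬝ᵥ (A *ᵥ u - μ • u) = 0

def HarmonicRitzPair {n : ℕ} (A : Matrix (Fin n) (Fin n) ℂ) (σ : ℂ)
    (K : Submodule ℂ (Fin n → ℂ)) (θ : ℂ) (v : Fin n → ℂ) : Prop :=
  v ∈ K ∧ v ≠ 0 ∧ ∀ y ∈ K, star ((A - σ • 1) *ᵥ y) ⬝ᵥ (A *ᵥ v - θ • v) = 0

def THarmonicRitzPair {n : ℕ} (A T : Matrix (Fin n) (Fin n) ℂ) (σ : ℂ)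
    (K : Submodule ℂ (Fin n → ℂ)) (θ : ℂ) (v : Fin n → ℂ) : Prop :=
  v ∈ K ∧ v ≠ 0 ∧ ∀ y ∈ K, star ((A - σ • 1) *ᵥ y) ⬝ᵥ (T *ᵥ (A *ᵥ v - θ • v)) = 0

def IsOrthProjOn {n : ℕ} (P : Matrix (Fin n) (Fin n) ℂ)
    (Q : Submodule ℂ (Fin n → ℂ)) : Prop :=
  P.IsHermitian ∧ P * P = P ∧ (∀ v, P *ᵥ v ∈ Q) ∧ (∀ v ∈ Q, P *ᵥ v = v)

/-!
Write `y = ⟪x, y⟫ x + w` with `w ⊥ x`. As `A` is Hermitian with `A x = λ x`, also `A w ⊥ x` and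
`A y = λ ⟪x, y⟫ x + A w`, so Pythagoras gives the identity
`sin²φ / sin²φ_A = (λ² ‖w‖² / ‖A w‖²) cos²φ + sin²φ`.
In an orthonormal eigenbasis of `A`, `w` has no component along the eigenvector of `λ` unless `λ`
is a repeated eigenvalue, so `‖A w‖² / ‖w‖²` lies between the minimum and the maximum of `λⱼ²`
over `Λ(A) \ λ`.
-/

open Finset WithLp
open scoped InnerProductSpace

section InnerProductSpace

variable {𝕜 E ι : Type*} [RCLike 𝕜] [NormedAddCommGroup E] [InnerProductSpace 𝕜 E]
  [Fintype ι] {T : E →ₗ[𝕜] E} {b : OrthonormalBasis ι 𝕜 E} {μ : ι → ℝ}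

theorem inner_sub_inner_smul_self {x : E} (hx : ‖x‖ = 1) (y : E) :
    ⟪x, y - ⟪x, y⟫_𝕜 • x⟫_𝕜 = 0 := by
  rw [inner_sub_right, inner_smul_right, inner_self_eq_norm_sq_to_K, hx]
  simp

theorem norm_sq_eq_norm_inner_sq_add {x : E} (hx : ‖x‖ = 1) (y : E) :
    ‖y‖ ^ 2 = ‖⟪x, y⟫_𝕜‖ ^ 2 + ‖y - ⟪x, y⟫_𝕜 • x‖ ^ 2 := by
  have horth : ⟪⟪x, y⟫_𝕜 • x, y - ⟪x, y⟫_𝕜 • x⟫_𝕜 = 0 := by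
    rw [inner_smul_left, inner_sub_inner_smul_self hx, mul_zero]
  have h := norm_add_sq_eq_norm_sq_add_norm_sq_of_inner_eq_zero _ _ horth
  rw [add_sub_cancel, norm_smul, hx, mul_one] at h
  simpa only [sq] using h

theorem one_sub_div_norm_sq_mul_norm_sq {x : E} (hx : ‖x‖ = 1) (v : E) :
    (1 - (‖⟪x, v⟫_𝕜‖ / ‖v‖) ^ 2) * ‖v‖ ^ 2 = ‖v - ⟪x, v⟫_𝕜 • x‖ ^ 2 := by
  rcases eq_or_ne v 0 with rfl | hv
  · simp
  · have hv : ‖v‖ ≠ 0 := norm_ne_zero_iff.2 hv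
    rw [sub_mul, div_pow, div_mul_cancel₀ _ (pow_ne_zero 2 hv), one_mul,
      norm_sq_eq_norm_inner_sq_add (𝕜 := 𝕜) hx v, add_sub_cancel_left]

theorem LinearMap.IsSymmetric.inner_eigenvector_apply (hT : T.IsSymmetric) {l : ℝ} {x : E}
    (hx : T x = (l : 𝕜) • x) (y : E) : ⟪x, T y⟫_𝕜 = l * ⟪x, y⟫_𝕜 := by
  rw [← hT, hx, inner_smul_left, RCLike.conj_ofReal]

theorem LinearMap.IsSymmetric.norm_sq_apply_eq_sum (hT : T.IsSymmetric)
    (hb : ∀ j, T (b j) = (μ j : 𝕜) • b j) (w : E) :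
    ‖T w‖ ^ 2 = ∑ j, μ j ^ 2 * ‖⟪b j, w⟫_𝕜‖ ^ 2 := by
  rw [← b.sum_sq_norm_inner_right]
  refine sum_congr rfl fun j _ => ?_
  rw [hT.inner_eigenvector_apply (hb j), norm_mul, mul_pow, RCLike.norm_ofReal, sq_abs]

theorem LinearMap.IsSymmetric.norm_sq_apply_bounds (hT : T.IsSymmetric)
    (hb : ∀ j, T (b j) = (μ j : 𝕜) • b j) {m M : ℝ} {w : E}
    (hw : ∀ j, ⟪b j, w⟫_𝕜 ≠ 0 → m ≤ μ j ^ 2 ∧ μ j ^ 2 ≤ M) :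
    m * ‖w‖ ^ 2 ≤ ‖T w‖ ^ 2 ∧ ‖T w‖ ^ 2 ≤ M * ‖w‖ ^ 2 := by
  have hterm : ∀ j, m * ‖⟪b j, w⟫_𝕜‖ ^ 2 ≤ μ j ^ 2 * ‖⟪b j, w⟫_𝕜‖ ^ 2 ∧
      μ j ^ 2 * ‖⟪b j, w⟫_𝕜‖ ^ 2 ≤ M * ‖⟪b j, w⟫_𝕜‖ ^ 2 := by
    intro j
    by_cases h : ⟪b j, w⟫_𝕜 = 0
    · simp [h]
    · exact ⟨by gcongr; exact (hw j h).1, by gcongr; exact (hw j h).2⟩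
  rw [hT.norm_sq_apply_eq_sum hb, ← b.sum_sq_norm_inner_right, mul_sum, mul_sum]
  exact ⟨sum_le_sum fun j _ => (hterm j).1, sum_le_sum fun j _ => (hterm j).2⟩

theorem LinearMap.IsSymmetric.inner_eigenbasis_eq_zero (hT : T.IsSymmetric)
    (hb : ∀ j, T (b j) = (μ j : 𝕜) • b j) {l : ℝ} {x : E} (hx : T x = (l : 𝕜) • x) {j : ι}
    (hj : μ j ≠ l) : ⟪b j, x⟫_𝕜 = 0 := by
  have h : (μ j : 𝕜) * ⟪b j, x⟫_𝕜 = l * ⟪b j, x⟫_𝕜 := by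
    rw [← hT.inner_eigenvector_apply (hb j), hx, inner_smul_right]
  refine (mul_eq_mul_right_iff.1 h).resolve_left ?_
  exact_mod_cast hj

theorem LinearMap.IsSymmetric.eq_inner_smul_of_simple (hT : T.IsSymmetric)
    (hb : ∀ j, T (b j) = (μ j : 𝕜) • b j) {i : ι} {x : E} (hx : T x = (μ i : 𝕜) • x)
    (hsimple : ∀ j ≠ i, μ j ≠ μ i) : x = ⟪b i, x⟫_𝕜 • b i := by
  conv_lhs => rw [← b.sum_repr' x]
  refine sum_eq_single i (fun j _ hj => ?_) (by simp)
  rw [hT.inner_eigenbasis_eq_zero hb hx (hsimple j hj), zero_smul]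

theorem LinearMap.IsSymmetric.norm_sq_apply_bounds_of_inner_eigenvector_eq_zero
    [DecidableEq ι] (hT : T.IsSymmetric) (hb : ∀ j, T (b j) = (μ j : 𝕜) • b j) {i : ι} {x w : E}
    (hx : T x = (μ i : 𝕜) • x) (hx0 : x ≠ 0) (hxw : ⟪x, w⟫_𝕜 = 0) (hne : (univ.erase i).Nonempty) :
    (univ.erase i).inf' hne (fun j => μ j ^ 2) * ‖w‖ ^ 2 ≤ ‖T w‖ ^ 2 ∧
      ‖T w‖ ^ 2 ≤ (univ.erase i).sup' hne (fun j => μ j ^ 2) * ‖w‖ ^ 2 := by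
  have hrange : ∀ j ≠ i, (univ.erase i).inf' hne (fun j => μ j ^ 2) ≤ μ j ^ 2 ∧
      μ j ^ 2 ≤ (univ.erase i).sup' hne (fun j => μ j ^ 2) := fun j hj =>
    have hj' : j ∈ univ.erase i := mem_erase.2 ⟨hj, mem_univ j⟩
    ⟨inf'_le _ hj', le_sup' (fun j => μ j ^ 2) hj'⟩
  refine hT.norm_sq_apply_bounds hb fun j hj => ?_
  rcases eq_or_ne j i with rfl | hji
  · by_cases hrepeated : ∃ k ≠ j, μ k = μ j
    · obtain ⟨k, hk, hkj⟩ := hrepeated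
      rw [← hkj]
      exact hrange k hk
    · -- a simple eigenvalue: `x` spans its eigenspace, so `w ⊥ x` has no `b j`-component
      refine absurd ?_ hj
      have hxj := hT.eq_inner_smul_of_simple hb hx fun k hk hkj => hrepeated ⟨k, hk, hkj⟩
      have hc : ⟪b j, x⟫_𝕜 ≠ 0 := fun h => hx0 (by rw [hxj, h, zero_smul])
      rw [hxj, inner_smul_left] at hxw
      exact (mul_eq_zero.1 hxw).resolve_left ((map_ne_zero _).2 hc)
  · exact hrange j hji

theorem LinearMap.IsSymmetric.apply_sub_inner_smul (hT : T.IsSymmetric) {l : ℝ} {x : E}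
    (hx : T x = (l : 𝕜) • x) (y : E) : T (y - ⟪x, y⟫_𝕜 • x) = T y - ⟪x, T y⟫_𝕜 • x := by
  rw [map_sub, map_smul, hx, smul_smul, hT.inner_eigenvector_apply hx, mul_comm]

theorem LinearMap.IsSymmetric.sin_sq_div_sin_sq_eq (hT : T.IsSymmetric) {l : ℝ} {x y : E}
    (hx : ‖x‖ = 1) (hTx : T x = (l : 𝕜) • x) (hy : ‖y‖ = 1) (hTw : T (y - ⟪x, y⟫_𝕜 • x) ≠ 0) :
    (1 - ‖⟪x, y⟫_𝕜‖ ^ 2) / (1 - (‖⟪x, T y⟫_𝕜‖ / ‖T y‖) ^ 2) =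
      l ^ 2 * ‖y - ⟪x, y⟫_𝕜 • x‖ ^ 2 / ‖T (y - ⟪x, y⟫_𝕜 • x)‖ ^ 2 * ‖⟪x, y⟫_𝕜‖ ^ 2 +
        (1 - ‖⟪x, y⟫_𝕜‖ ^ 2) := by
  set w := y - ⟪x, y⟫_𝕜 • x
  have hsin : 1 - ‖⟪x, y⟫_𝕜‖ ^ 2 = ‖w‖ ^ 2 := by
    have := norm_sq_eq_norm_inner_sq_add (𝕜 := 𝕜) hx y
    rw [hy, one_pow] at this
    linarith
  have hTy : ‖T y‖ ^ 2 = l ^ 2 * ‖⟪x, y⟫_𝕜‖ ^ 2 + ‖T w‖ ^ 2 := by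
    rw [norm_sq_eq_norm_inner_sq_add (𝕜 := 𝕜) hx (T y), ← hT.apply_sub_inner_smul hTx,
      hT.inner_eigenvector_apply hTx, norm_mul, RCLike.norm_ofReal, mul_pow, sq_abs]
  have hTw_pos : 0 < ‖T w‖ ^ 2 := pow_pos (norm_pos_iff.2 hTw) 2
  have hsinA : 1 - (‖⟪x, T y⟫_𝕜‖ / ‖T y‖) ^ 2 = ‖T w‖ ^ 2 / ‖T y‖ ^ 2 := by
    rw [eq_div_iff (by rw [hTy]; positivity), one_sub_div_norm_sq_mul_norm_sq hx,
      ← hT.apply_sub_inner_smul hTx]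
  rw [hsinA, hsin, hTy]
  field_simp

theorem LinearMap.IsSymmetric.sin_sq_ratio_bounds [DecidableEq ι] (hT : T.IsSymmetric)
    (hb : ∀ j, T (b j) = (μ j : 𝕜) • b j) (hμ : ∀ j, μ j ≠ 0) {i : ι}
    (hne : (univ.erase i).Nonempty) {x y : E} (hx : ‖x‖ = 1) (hTx : T x = (μ i : 𝕜) • x)
    (hy : ‖y‖ = 1) (hxy : ‖⟪x, y⟫_𝕜‖ < 1) :
    μ i ^ 2 / (univ.erase i).sup' hne (fun j => μ j ^ 2) * ‖⟪x, y⟫_𝕜‖ ^ 2 + (1 - ‖⟪x, y⟫_𝕜‖ ^ 2) ≤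
        (1 - ‖⟪x, y⟫_𝕜‖ ^ 2) / (1 - (‖⟪x, T y⟫_𝕜‖ / ‖T y‖) ^ 2) ∧
      (1 - ‖⟪x, y⟫_𝕜‖ ^ 2) / (1 - (‖⟪x, T y⟫_𝕜‖ / ‖T y‖) ^ 2) ≤
        μ i ^ 2 / (univ.erase i).inf' hne (fun j => μ j ^ 2) * ‖⟪x, y⟫_𝕜‖ ^ 2 +
          (1 - ‖⟪x, y⟫_𝕜‖ ^ 2) := by
  set w := y - ⟪x, y⟫_𝕜 • x
  set m := (univ.erase i).inf' hne (fun j => μ j ^ 2)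
  set M := (univ.erase i).sup' hne (fun j => μ j ^ 2)
  obtain ⟨hlow, hupp⟩ := hT.norm_sq_apply_bounds_of_inner_eigenvector_eq_zero hb hTx
    (norm_ne_zero_iff.1 (by rw [hx]; exact one_ne_zero)) (inner_sub_inner_smul_self hx y) hne
  have hm : 0 < m := (lt_inf'_iff hne).2 fun j _ => by have := hμ j; positivity
  have hw : 0 < ‖w‖ ^ 2 := by
    rw [← one_sub_div_norm_sq_mul_norm_sq hx, hy, div_one, one_pow, mul_one]
    nlinarith [norm_nonneg ⟪x, y⟫_𝕜]
  have hTw : 0 < ‖T w‖ ^ 2 := (mul_pos hm hw).trans_le hlow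
  have hTw0 : T w ≠ 0 := by
    rintro h
    simp [h] at hTw
  rw [hT.sin_sq_div_sin_sq_eq hx hTx hy hTw0]
  have hlo : μ i ^ 2 / M ≤ μ i ^ 2 * ‖w‖ ^ 2 / ‖T w‖ ^ 2 := by
    rw [← mul_div_mul_right _ M hw.ne']
    gcongr
  have hhi : μ i ^ 2 * ‖w‖ ^ 2 / ‖T w‖ ^ 2 ≤ μ i ^ 2 / m := by
    rw [← mul_div_mul_right _ m hw.ne']
    gcongr
  exact ⟨by gcongr, by gcongr⟩

end InnerProductSpace

theorem hnorm_eq_norm_toLp {n : ℕ} (v : Fin n → ℂ) : hnorm v = ‖toLp 2 v‖ := by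
  rw [hnorm, @norm_eq_sqrt_re_inner ℂ, EuclideanSpace.inner_toLp_toLp, dotProduct_comm]
  rfl

theorem cosAngle_eq_norm_inner {n : ℕ} (u v : Fin n → ℂ) :
    cosAngle u v = ‖⟪toLp 2 u, toLp 2 v⟫_ℂ‖ / (‖toLp 2 u‖ * ‖toLp 2 v‖) := by
  rw [cosAngle, hnorm_eq_norm_toLp, hnorm_eq_norm_toLp, EuclideanSpace.inner_toLp_toLp,
    dotProduct_comm]

theorem sinAngle_sq {n : ℕ} (u v : Fin n → ℂ) : sinAngle u v ^ 2 = 1 - cosAngle u v ^ 2 := by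
  have hcos : cosAngle u v ≤ 1 := by
    rw [cosAngle_eq_norm_inner]
    exact div_le_one_of_le₀ (norm_inner_le_norm _ _) (by positivity)
  have hcos' : 0 ≤ cosAngle u v := by
    rw [cosAngle_eq_norm_inner]
    positivity
  rw [sinAngle, Real.sq_sqrt (by nlinarith)]

theorem Matrix.IsHermitian.eigenvalues_ne_zero {𝕜 n : Type*} [RCLike 𝕜] [Fintype n]
    [DecidableEq n] {A : Matrix n n 𝕜} (hA : A.IsHermitian) (hdet : IsUnit A.det) (j : n) :
    hA.eigenvalues j ≠ 0 := by
  have h := hdet.ne_zero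
  rw [hA.det_eq_prod_eigenvalues] at h
  exact fun h0 => prod_ne_zero_iff.1 h j (mem_univ j) (by simp [h0])

theorem Matrix.IsHermitian.toEuclideanLin_eigenvectorBasis {𝕜 n : Type*} [RCLike 𝕜] [Fintype n]
    [DecidableEq n] {A : Matrix n n 𝕜} (hA : A.IsHermitian) (j : n) :
    toEuclideanLin A (hA.eigenvectorBasis j) = (hA.eigenvalues j : 𝕜) • hA.eigenvectorBasis j := by
  apply ofLp_injective
  rw [toLpLin_apply, ofLp_toLp, hA.mulVec_eigenvectorBasis, ofLp_smul,
    RCLike.real_smul_eq_coe_smul (K := 𝕜)]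

/-- two-sided bound a₀²cos²φ + sin²φ ≤ sin²φ/sin²φ_A ≤ a₁²cos²φ + sin²φ,
where a₀² = λ²/max_{λⱼ∈Λ(A)∖λ} λⱼ² and a₁² = λ²/min_{λⱼ∈Λ(A)∖λ} λⱼ². -/
theorem stmt17_sin_ratio_bounds
    {n : ℕ} (A : Matrix (Fin n) (Fin n) ℂ) (hA : A.IsHermitian) (hdet : IsUnit A.det)
    (l : ℝ) (x : Fin n → ℂ) (hAx : A *ᵥ x = (l : ℂ) • x) (hxn : hnorm x = 1)
    (i₀ : Fin n) (hi₀ : hA.eigenvalues i₀ = l)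
    (hne : (Finset.univ.erase i₀).Nonempty)
    (y : Fin n → ℂ) (hyn : hnorm y = 1) (hphi : cosAngle x y < 1) :
    (l ^ 2 / (Finset.univ.erase i₀).sup' hne (fun j => hA.eigenvalues j ^ 2)) *
          cosAngle x y ^ 2 + sinAngle x y ^ 2 ≤
        sinAngle x y ^ 2 / sinAngle x (A *ᵥ y) ^ 2 ∧
      sinAngle x y ^ 2 / sinAngle x (A *ᵥ y) ^ 2 ≤
        (l ^ 2 / (Finset.univ.erase i₀).inf' hne (fun j => hA.eigenvalues j ^ 2)) *
          cosAngle x y ^ 2 + sinAngle x y ^ 2 := by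
  set T := toEuclideanLin A
  have hT : T.IsSymmetric := isSymmetric_toEuclideanLin_iff.mpr hA
  have hX : ‖toLp 2 x‖ = 1 := by rw [← hnorm_eq_norm_toLp, hxn]
  have hY : ‖toLp 2 y‖ = 1 := by rw [← hnorm_eq_norm_toLp, hyn]
  have hTX : T (toLp 2 x) = (hA.eigenvalues i₀ : ℂ) • toLp 2 x := by
    rw [hi₀]; exact congrArg (toLp 2) hAx
  have hcos : cosAngle x y = ‖⟪toLp 2 x, toLp 2 y⟫_ℂ‖ := by
    rw [cosAngle_eq_norm_inner, hX, hY, mul_one, div_one]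
  have hcosA : cosAngle x (A *ᵥ y) = ‖⟪toLp 2 x, T (toLp 2 y)⟫_ℂ‖ / ‖T (toLp 2 y)‖ := by
    rw [cosAngle_eq_norm_inner, hX, one_mul]; rfl
  rw [sinAngle_sq, sinAngle_sq, hcosA, hcos, ← hi₀]
  exact hT.sin_sq_ratio_bounds hA.toEuclideanLin_eigenvectorBasis (hA.eigenvalues_ne_zero hdet)
    hne hX hTX hY (hcos ▸ hphi)
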